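/- Let P ⊆ ℝⁿ be a Delone set of finite local complexity. There exists ε with 0 < ε < 1 such that for every differentiable function φ : ℝⁿ → ℝⁿ whose derivative map dφ is strongly P-equivariant and which satisfies sup_{x ∈ ℝⁿ} ‖Dφ(x) − I‖ < ε, the following holds: for every r > 0 there exists r' > 0 such that for all x, y ∈ ℝⁿ, B_{r'}[φ(P) − φ(x)] = B_{r'}[φ(P) − φ(y)] implies B_r[P − x] = B_r[P − y]. -/

import Mathlib

open Metric Set

noncomputable section

/-- Euclidean space ℝⁿ. -/
abbrev Euc (n : ℕ) := EuclideanSpace ℝ (Fin n)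

/-- The translate `P - x = {p - x : p ∈ P}`. -/
def shiftSet {n : ℕ} (P : Set (Euc n)) (x : Euc n) : Set (Euc n) :=
  (fun p => p - x) '' P

/-- The `r`-patch of `P` around `x`: `B_r[P - x] = B(0,r) ∩ (P - x)`. -/
def patch {n : ℕ} (P : Set (Euc n)) (r : ℝ) (x : Euc n) : Set (Euc n) :=
  ball (0 : Euc n) r ∩ shiftSet P x

/-- `P` is uniformly discrete: there is a positive minimal distance between points. -/
def UnifDiscrete {n : ℕ} (P : Set (Euc n)) : Prop :=
  ∃ δ > 0, ∀ p ∈ P, ∀ q ∈ P, p ≠ q → δ ≤ ‖p - q‖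

/-- `P` is relatively dense: every ball of radius `R` contains a point of `P`. -/
def RelDense {n : ℕ} (P : Set (Euc n)) : Prop :=
  ∃ R > 0, ∀ x : Euc n, ∃ p ∈ P, ‖p - x‖ < R

/-- `P` has finite local complexity: for each `r > 0`, only finitely many `r`-patches
around points of `P`. -/
def FLC {n : ℕ} (P : Set (Euc n)) : Prop :=
  ∀ r > 0, {s : Set (Euc n) | ∃ x ∈ P, s = patch P r x}.Finite

/-- `f` is `P`-equivariant with range `R`. -/
def EquivRange {n : ℕ} {F : Type*} (P : Set (Euc n)) (R : ℝ) (f : Euc n → F) : Prop :=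
  ∀ x y : Euc n, patch P R x = patch P R y → f x = f y

/-- `f` is strongly `P`-equivariant: `P`-equivariant with some finite range `R > 0`. -/
def StrongEquiv {n : ℕ} {F : Type*} (P : Set (Euc n)) (f : Euc n → F) : Prop :=
  ∃ R > 0, EquivRange P R f

/-- `f`, viewed as a function on the subset `Q`, is `P`-equivariant with range `R`. -/
def EquivRangeOn {n : ℕ} {F : Type*} (P Q : Set (Euc n)) (R : ℝ) (f : Euc n → F) : Prop :=
  ∀ x ∈ Q, ∀ y ∈ Q, patch P R x = patch P R y → f x = f y

/-- `f`, viewed as a function on the subset `Q`, is strongly `P`-equivariant. -/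
def StrongEquivOn {n : ℕ} {F : Type*} (P Q : Set (Euc n)) (f : Euc n → F) : Prop :=
  ∃ R > 0, EquivRangeOn P Q R f

/-- `Q` is locally derivable from `P`. -/
def LocallyDerivable {n : ℕ} (P Q : Set (Euc n)) : Prop :=
  ∃ R > 0, ∀ x y : Euc n, patch P R x = patch P R y →
    ({0} : Set (Euc n)) ∩ shiftSet Q x = ({0} : Set (Euc n)) ∩ shiftSet Q y

/-- Hypothesis (H): for every `r > 0` there is `r' > 0` such that for all `x`,
`B(φ(x), r) ∩ φ(P) ⊆ φ(B(x, r') ∩ P)`. -/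
def HypoH {n : ℕ} (P : Set (Euc n)) (φ : Euc n → Euc n) : Prop :=
  ∀ r > 0, ∃ r' > 0, ∀ x : Euc n, ball (φ x) r ∩ (φ '' P) ⊆ φ '' (ball x r' ∩ P)

/-- The pattern metric `D` on closed subsets of ℝⁿ. -/
def patternDist {n : ℕ} (A B : Set (Euc n)) : ℝ :=
  sInf {ε : ℝ | 0 < ε ∧ Metric.hausdorffDist
    ((ball (0 : Euc n) (1 / ε) ∩ A) ∪ sphere (0 : Euc n) (1 / ε))
    ((ball (0 : Euc n) (1 / ε) ∩ B) ∪ sphere (0 : Euc n) (1 / ε)) ≤ ε}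

/-- A continuous `f : ℝⁿ → ℝⁿ` is weakly `P`-equivariant if it is uniformly approximated
by strongly `P`-equivariant continuous functions. -/
def WeakEquiv {n : ℕ} (P : Set (Euc n)) (f : Euc n → Euc n) : Prop :=
  ∀ ε > 0, ∃ g : Euc n → Euc n, Continuous g ∧ StrongEquiv P g ∧ ∀ x : Euc n, ‖f x - g x‖ < ε

/-- `P` is aperiodic: the only translation fixing `P` is `0`. -/
def IsAperiodicSet {n : ℕ} (P : Set (Euc n)) : Prop :=
  ∀ x : Euc n, shiftSet P x = P → x = 0

/-!
If `‖Dφ - I‖ < ε`, then `φ` moves every short difference vector `p' - p` of `P` by less than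
the minimal gap between the (by FLC, finitely many) short difference vectors of `P`. Hence
equal `φ(P)`-patches around `φ x` and `φ y` match points of `P` near `x` with points of `P`
near `y` preserving short differences, and chaining through the relatively dense set `P` the
match is a single translation `p ↦ p + c` on a large ball. The `P`-patches at `u` and `u + c`
then agree, so `Dφ(u + c) = Dφ(u)` by equivariance, `φ (· + c) - φ` is constant near `x`, and
comparing with a matched point gives `φ (x + c) = φ y`, i.e. `x + c = y`.
-/

section General

variable {E : Type*} [NormedAddCommGroup E]

theorem isDiscrete_of_pairwise_le_dist {X : Type*} [PseudoMetricSpace X] {s : Set X} {δ : ℝ}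
    (hδ : 0 < δ) (hs : s.Pairwise fun x y => δ ≤ dist x y) : IsDiscrete s := by
  refine isDiscrete_iff_forall_mem_exists_isOpen.2 fun x hx => ⟨ball x δ, isOpen_ball, ?_⟩
  refine Set.eq_singleton_iff_unique_mem.2 ⟨⟨mem_ball_self hδ, hx⟩, fun y ⟨hyx, hy⟩ => ?_⟩
  by_contra hne
  exact (hs hy hx hne).not_gt (mem_ball.1 hyx)

theorem Set.Finite.exists_pos_eq_of_norm_sub_lt {V : Set E} (hV : V.Finite) :
    ∃ d > 0, ∀ v ∈ V, ∀ w ∈ V, ‖v - w‖ < d → v = w := by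
  have hclosed : IsClosed (image2 (· - ·) V V \ {0}) := (hV.image2 _ hV).sdiff.isClosed
  obtain ⟨d, hd, hball⟩ := Metric.isOpen_iff.1 hclosed.isOpen_compl 0 (by simp)
  refine ⟨d, hd, fun v hv w hw hvw => ?_⟩
  by_contra hne
  exact hball (mem_ball_zero_iff.2 hvw) ⟨mem_image2_of_mem hv hw, sub_ne_zero.2 hne⟩

variable {ε : ℝ} {φ : E → E}

theorem norm_map_sub_le_of_near_id (hφ : ∀ a b, ‖φ b - φ a - (b - a)‖ ≤ ε * ‖b - a‖) (a b : E) :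
    ‖φ b - φ a‖ ≤ (1 + ε) * ‖b - a‖ := by
  have := norm_le_norm_add_norm_sub' (φ b - φ a) (b - a)
  linarith [hφ a b]

theorem le_norm_map_sub_of_near_id (hφ : ∀ a b, ‖φ b - φ a - (b - a)‖ ≤ ε * ‖b - a‖) (a b : E) :
    (1 - ε) * ‖b - a‖ ≤ ‖φ b - φ a‖ := by
  have := norm_le_norm_add_norm_sub' (b - a) (φ b - φ a)
  rw [norm_sub_rev (b - a)] at this
  linarith [hφ a b]

theorem injective_of_near_id (hφ : ∀ a b, ‖φ b - φ a - (b - a)‖ ≤ ε * ‖b - a‖) (hε : ε < 1) :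
    Function.Injective φ := fun a b hab => by
  have := le_norm_map_sub_of_near_id hφ a b
  rw [hab, sub_self, norm_zero] at this
  have : ‖b - a‖ = 0 := le_antisymm (nonpos_of_mul_nonpos_right this (by linarith)) (norm_nonneg _)
  exact (sub_eq_zero.1 (norm_eq_zero.1 this)).symm

theorem sub_eq_sub_of_map_sub_eq {P : Set E} {M d : ℝ}
    (hgap : ∀ p ∈ P, ∀ q ∈ P, ∀ p' ∈ P, ∀ q' ∈ P, ‖p - q‖ < 4 * M → ‖p' - q'‖ < 4 * M →
      ‖(p - q) - (p' - q')‖ < d → p - q = p' - q')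
    (hφ : ∀ a b, ‖φ b - φ a - (b - a)‖ ≤ ε * ‖b - a‖) (hε₀ : 0 ≤ ε) (hε : ε ≤ 1 / 7)
    (hεd : 7 * ε * M < d) {p p' q q' : E} (hp : p ∈ P) (hp' : p' ∈ P) (hq : q ∈ P)
    (hq' : q' ∈ P) (hpp' : ‖p' - p‖ < 3 * M) (h : φ q' - φ q = φ p' - φ p) :
    q' - q = p' - p := by
  -- `ε ≤ 1/7` gives `(1 + ε) / (1 - ε) ≤ 4/3`: `q' - q` is at most `4/3` as long as `p' - p`
  have hqq' : ‖q' - q‖ < 4 * M := by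
    have h₁ := le_norm_map_sub_of_near_id hφ q q'
    have h₂ := norm_map_sub_le_of_near_id hφ p p'
    rw [h] at h₁
    nlinarith [norm_nonneg (q' - q), norm_nonneg (p' - p)]
  refine hgap q' hq' q hq p' hp' p hp hqq' (by linarith [norm_nonneg (p' - p)]) ?_
  calc ‖(q' - q) - (p' - p)‖ = ‖(φ p' - φ p - (p' - p)) - (φ q' - φ q - (q' - q))‖ := by
        rw [h]; congr 1; abel
    _ ≤ ε * ‖p' - p‖ + ε * ‖q' - q‖ := (norm_sub_le _ _).trans (add_le_add (hφ p p') (hφ q q'))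
    _ < d := by nlinarith

variable [NormedSpace ℝ E]

theorem Convex.map_add_sub_map_eq_of_fderiv_add_eq {F : Type*} [NormedAddCommGroup F]
    [NormedSpace ℝ F] {f : E → F} (hf : Differentiable ℝ f) {s : Set E} (hs : Convex ℝ s) {c : E}
    (h : ∀ u ∈ s, fderiv ℝ f (u + c) = fderiv ℝ f u) {a b : E} (ha : a ∈ s) (hb : b ∈ s) :
    f (a + c) - f a = f (b + c) - f b := by
  have hg : ∀ u ∈ s, HasFDerivWithinAt (fun w => f (w + c) - f w) (0 : E →L[ℝ] F) s u := by
    intro u hu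
    have := ((hf (u + c)).hasFDerivAt.comp u ((hasFDerivAt_id u).add_const c)).sub
      (hf u).hasFDerivAt
    rw [ContinuousLinearMap.comp_id, h u hu, sub_self] at this
    exact this.hasFDerivWithinAt
  have := hs.norm_image_sub_le_of_norm_hasFDerivWithin_le hg (fun _ _ => norm_zero.le) hb ha
  rwa [zero_mul, norm_le_zero_iff, sub_eq_zero] at this

theorem eq_of_forall_near_pairs {α : Type*} {P : Set E} {M S : ℝ} {x : E} {f : E → α}
    (hdens : ∀ z, ∃ p ∈ P, ‖p - z‖ < M)
    (hf : ∀ p ∈ P, ∀ p' ∈ P, ‖p - x‖ < S + M → ‖p' - x‖ < S + M → ‖p' - p‖ < 3 * M →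
      f p' = f p)
    {a b : E} (ha : a ∈ P) (hb : b ∈ P) (hax : ‖a - x‖ < S) (hbx : ‖b - x‖ < S) :
    f b = f a := by
  have hM : 0 < M := by
    obtain ⟨p, -, hp⟩ := hdens a
    exact (norm_nonneg _).trans_lt hp
  obtain ⟨k, hk⟩ := exists_nat_gt (‖b - a‖ / M)
  have hk0 : (0 : ℝ) < k := (div_nonneg (norm_nonneg _) hM.le).trans_lt hk
  set z : ℕ → E := fun i => a + ((i : ℝ) / k) • (b - a) with hz
  have hzx : ∀ i ≤ k, ‖z i - x‖ < S := fun i hi => by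
    have : z i ∈ ball x S := (convex_ball x S).add_smul_sub_mem
      (mem_ball_iff_norm.2 hax) (mem_ball_iff_norm.2 hbx)
      ⟨by positivity, div_le_one_of_le₀ (by exact_mod_cast hi) hk0.le⟩
    exact mem_ball_iff_norm.1 this
  have hzstep : ∀ i, ‖z (i + 1) - z i‖ < M := fun i => by
    have : z (i + 1) - z i = (1 / (k : ℝ)) • (b - a) := by
      simp only [hz]; push_cast; module
    rw [this, norm_smul, Real.norm_of_nonneg (by positivity), one_div_mul_eq_div,
      div_lt_iff₀ hk0]
    rwa [div_lt_iff₀ hM, mul_comm] at hk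
  have near : ∀ p z : E, ‖p - z‖ < M → ‖z - x‖ < S → ‖p - x‖ < S + M := fun p z h₁ h₂ => by
    linarith [norm_sub_le_norm_sub_add_norm_sub p z x]
  have hwalk : ∀ i ≤ k, ∀ p ∈ P, ‖p - z i‖ < M → f p = f a := by
    intro i
    induction i with
    | zero =>
      intro _ p hp hpa
      have hpa : ‖p - a‖ < M := by simpa [hz] using hpa
      exact hf a ha p hp (by linarith) (near p a hpa hax) (by linarith)
    | succ i ih =>
      intro hi p hp hpz
      obtain ⟨q, hq, hqz⟩ := hdens (z i)
      rw [← ih (by omega) q hq hqz]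
      refine hf q hq p hp (near q _ hqz (hzx i (by omega))) (near p _ hpz (hzx _ hi)) ?_
      calc ‖p - q‖ ≤ ‖p - z (i + 1)‖ + ‖z (i + 1) - z i‖ + ‖z i - q‖ := by
            simpa only [dist_eq_norm] using dist_triangle4 p (z (i + 1)) (z i) q
        _ < M + M + M := by gcongr; exacts [hzstep i, by rwa [norm_sub_rev]]
        _ = 3 * M := by ring
  refine hwalk k le_rfl b hb ?_
  have : z k = b := by simp only [hz, div_self hk0.ne', one_smul, add_sub_cancel]
  rwa [this, sub_self, norm_zero]

end General

section Patches

variable {n : ℕ}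

theorem add_sub_mem_of_patch_eq {Q : Set (Euc n)} {r : ℝ} {u v a : Euc n}
    (h : patch Q r u = patch Q r v) (ha : a ∈ Q) (hau : ‖a - u‖ < r) : a - u + v ∈ Q := by
  have : a - u ∈ patch Q r v := h ▸ ⟨mem_ball_zero_iff.2 hau, a, ha, rfl⟩
  obtain ⟨-, b, hb, hba⟩ := this
  rwa [← hba, sub_add_cancel]

theorem patch_eq_patch_add {P : Set (Euc n)} {r : ℝ} {u c : Euc n}
    (h₁ : ∀ p ∈ P, ‖p - u‖ < r → p + c ∈ P) (h₂ : ∀ q ∈ P, ‖q - (u + c)‖ < r → q - c ∈ P) :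
    patch P r u = patch P r (u + c) := by
  ext z
  constructor
  · rintro ⟨hz, p, hp, rfl⟩
    exact ⟨hz, p + c, h₁ p hp (mem_ball_zero_iff.1 hz), add_sub_add_right_eq_sub p u c⟩
  · rintro ⟨hz, q, hq, rfl⟩
    exact ⟨hz, q - c, h₂ q hq (mem_ball_zero_iff.1 hz), by simp only [sub_sub, add_comm c]⟩

theorem UnifDiscrete.finite_patch {P : Set (Euc n)} (hUD : UnifDiscrete P) (r : ℝ) (x : Euc n) :
    (patch P r x).Finite := by
  obtain ⟨δ, hδ, hsep⟩ := hUD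
  have hs : (shiftSet P x).Pairwise fun a b => δ ≤ dist a b := by
    rintro _ ⟨p, hp, rfl⟩ _ ⟨q, hq, rfl⟩ hne
    rw [dist_eq_norm, sub_sub_sub_cancel_right]
    exact hsep p hp q hq (by rintro rfl; exact hne rfl)
  exact finite_isBounded_inter_isClosed (isDiscrete_of_pairwise_le_dist hδ hs) isBounded_ball
    (isClosed_of_pairwise_le_dist hδ hs)

theorem FLC.exists_pos_sub_eq_of_norm_sub_lt {P : Set (Euc n)} (hFLC : FLC P)
    (hUD : UnifDiscrete P) {ρ : ℝ} (hρ : 0 < ρ) :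
    ∃ d > 0, ∀ p ∈ P, ∀ q ∈ P, ∀ p' ∈ P, ∀ q' ∈ P, ‖p - q‖ < ρ → ‖p' - q'‖ < ρ →
      ‖(p - q) - (p' - q')‖ < d → p - q = p' - q' := by
  have hV : (⋃₀ {s | ∃ x ∈ P, s = patch P ρ x}).Finite :=
    (hFLC ρ hρ).sUnion (by rintro _ ⟨x, -, rfl⟩; exact hUD.finite_patch ρ x)
  obtain ⟨d, hd, hgap⟩ := hV.exists_pos_eq_of_norm_sub_lt
  have hmem : ∀ p ∈ P, ∀ q ∈ P, ‖p - q‖ < ρ → p - q ∈ ⋃₀ {s | ∃ x ∈ P, s = patch P ρ x} :=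
    fun p hp q hq h => ⟨patch P ρ q, ⟨q, hq, rfl⟩, mem_ball_zero_iff.2 h, p, hp, rfl⟩
  exact ⟨d, hd, fun p hp q hq p' hp' q' hq' h h' =>
    hgap _ (hmem p hp q hq h) _ (hmem p' hp' q' hq' h')⟩

end Patches

section Rigidity

variable {n : ℕ} {P : Set (Euc n)} {M ε r' : ℝ} {φ : Euc n → Euc n} {x y : Euc n}

theorem exists_add_mem_of_patch_image_eq (hdens : ∀ z, ∃ p ∈ P, ‖p - z‖ < M)
    (hrigid : ∀ p ∈ P, ∀ p' ∈ P, ∀ q ∈ P, ∀ q' ∈ P, ‖p' - p‖ < 3 * M →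
      φ q' - φ q = φ p' - φ p → q' - q = p' - p)
    (hφ : ∀ a b, ‖φ b - φ a - (b - a)‖ ≤ ε * ‖b - a‖) (hε : ε ≤ 1 / 7) {ρ : ℝ} (hMρ : M ≤ ρ)
    (hr' : 2 * (ρ + M) ≤ r') (hpatch : patch (φ '' P) r' (φ x) = patch (φ '' P) r' (φ y)) :
    ∃ c, ∀ p ∈ P, ‖p - x‖ < ρ → p + c ∈ P ∧ φ (p + c) - φ p = φ y - φ x := by
  have hmatch : ∀ p ∈ P, ‖p - x‖ < ρ + M → ∃ q ∈ P, φ q - φ p = φ y - φ x := by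
    intro p hp hpx
    have hφp : ‖φ p - φ x‖ < r' :=
      (norm_map_sub_le_of_near_id hφ x p).trans_lt (by nlinarith [norm_nonneg (p - x)])
    obtain ⟨q, hq, hqp⟩ := add_sub_mem_of_patch_eq hpatch (mem_image_of_mem φ hp) hφp
    exact ⟨q, hq, by rw [hqp]; abel⟩
  choose! ψ hψP hψ using hmatch
  obtain ⟨p₀, hp₀, hp₀x⟩ := hdens x
  have hM : 0 < M := (norm_nonneg _).trans_lt hp₀x
  have hconst : ∀ p ∈ P, ‖p - x‖ < ρ → ψ p - p = ψ p₀ - p₀ := by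
    refine fun p hp hpx => eq_of_forall_near_pairs (f := fun p => ψ p - p) hdens ?_ hp₀ hp
      (by linarith) hpx
    intro p hp p' hp' hpx hp'x hpp'
    have := hrigid p hp p' hp' (ψ p) (hψP p hp hpx) (ψ p') (hψP p' hp' hp'x) hpp'
      (by linear_combination (norm := module) hψ p' hp' hp'x - hψ p hp hpx)
    linear_combination (norm := module) this
  refine ⟨ψ p₀ - p₀, fun p hp hpx => ?_⟩
  rw [← hconst p hp hpx, add_sub_cancel]
  exact ⟨hψP p hp (by linarith), hψ p hp (by linarith)⟩

theorem exists_translation_of_patch_image_eq (hdens : ∀ z, ∃ p ∈ P, ‖p - z‖ < M)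
    (hrigid : ∀ p ∈ P, ∀ p' ∈ P, ∀ q ∈ P, ∀ q' ∈ P, ‖p' - p‖ < 3 * M →
      φ q' - φ q = φ p' - φ p → q' - q = p' - p)
    (hφ : ∀ a b, ‖φ b - φ a - (b - a)‖ ≤ ε * ‖b - a‖) (hε : ε ≤ 1 / 7) {K : ℝ} (hMK : M ≤ K)
    (hr' : 2 * (K + 4 * M) ≤ r') (hpatch : patch (φ '' P) r' (φ x) = patch (φ '' P) r' (φ y)) :
    ∃ c, (∀ u s, ‖u - x‖ + s ≤ K → patch P s u = patch P s (u + c)) ∧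
      ∀ p ∈ P, ‖p - x‖ < K → φ (p + c) - φ p = φ y - φ x := by
  obtain ⟨p₀, hp₀, hp₀x⟩ := hdens x
  have hM : 0 < M := (norm_nonneg _).trans_lt hp₀x
  obtain ⟨c, hc⟩ := exists_add_mem_of_patch_image_eq hdens hrigid hφ hε hMK (by linarith) hpatch
  obtain ⟨c', hc'⟩ := exists_add_mem_of_patch_image_eq (ρ := K + 3 * M) hdens hrigid hφ hε
    (by linarith) (by linarith) hpatch.symm
  obtain ⟨hp₀c, hφp₀c⟩ := hc p₀ hp₀ (by linarith)
  have hp₀cy : ‖p₀ + c - y‖ < 2 * M := by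
    have h₁ := le_norm_map_sub_of_near_id hφ y (p₀ + c)
    have h₂ := norm_map_sub_le_of_near_id hφ x p₀
    have : φ (p₀ + c) - φ y = φ p₀ - φ x := by linear_combination (norm := module) hφp₀c
    rw [this] at h₁
    nlinarith [norm_nonneg (p₀ + c - y), norm_nonneg (p₀ - x)]
  have hcc' : c' = -c := by
    have h := (hc' (p₀ + c) hp₀c (by linarith)).2
    have : p₀ + c + c' = p₀ := injective_of_near_id hφ (by linarith)
      (by linear_combination (norm := module) h + hφp₀c)
    linear_combination (norm := module) this
  have hcyx : ‖c - (y - x)‖ < 3 * M := by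
    calc ‖c - (y - x)‖ = ‖(p₀ + c - y) - (p₀ - x)‖ := by congr 1; abel
      _ ≤ ‖p₀ + c - y‖ + ‖p₀ - x‖ := norm_sub_le _ _
      _ < 3 * M := by linarith
  refine ⟨c, fun u s hus => patch_eq_patch_add (fun p hp hpu => (hc p hp ?_).1) fun q hq hqu => ?_,
    fun p hp hpx => (hc p hp hpx).2⟩
  · linarith [norm_sub_le_norm_sub_add_norm_sub p u x]
  · have hqy : ‖q - y‖ < K + 3 * M := by
      calc ‖q - y‖ = ‖(q - (u + c)) + (u - x) + (c - (y - x))‖ := by congr 1; abel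
        _ ≤ ‖q - (u + c)‖ + ‖u - x‖ + ‖c - (y - x)‖ := norm_add₃_le
        _ < K + 3 * M := by linarith
    simpa [hcc', ← sub_eq_add_neg] using (hc' q hq hqy).1

theorem add_eq_of_equivRange_fderiv (hφd : Differentiable ℝ φ)
    (hφ : ∀ a b, ‖φ b - φ a - (b - a)‖ ≤ ε * ‖b - a‖) (hε : ε < 1)
    (hdens : ∀ z, ∃ p ∈ P, ‖p - z‖ < M) {R K : ℝ} {c : Euc n}
    (hR : EquivRange P R (fderiv ℝ φ)) (hR₀ : 0 ≤ R) (hK : M + R ≤ K)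
    (hshift : ∀ u s, ‖u - x‖ + s ≤ K → patch P s u = patch P s (u + c))
    (hmap : ∀ p ∈ P, ‖p - x‖ < K → φ (p + c) - φ p = φ y - φ x) :
    x + c = y := by
  obtain ⟨p₀, hp₀, hp₀x⟩ := hdens x
  have hfd : ∀ u ∈ ball x M, fderiv ℝ φ (u + c) = fderiv ℝ φ u := fun u hu =>
    (hR _ _ (hshift u R (by rw [mem_ball_iff_norm] at hu; linarith))).symm
  have := (convex_ball x M).map_add_sub_map_eq_of_fderiv_add_eq hφd hfd
    (mem_ball_self ((norm_nonneg _).trans_lt hp₀x)) (mem_ball_iff_norm.2 hp₀x)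
  rw [hmap p₀ hp₀ (by linarith), sub_left_inj] at this
  exact injective_of_near_id hφ hε this

end Rigidity

theorem stmt17 {n : ℕ} (P : Set (Euc n))
    (hUD : UnifDiscrete P) (hRD : RelDense P) (hFLC : FLC P) :
    ∃ ε : ℝ, 0 < ε ∧ ε < 1 ∧
      ∀ φ : Euc n → Euc n, Differentiable ℝ φ →
      StrongEquiv P (fderiv ℝ φ) →
      (∀ x : Euc n, ‖fderiv ℝ φ x - ContinuousLinearMap.id ℝ (Euc n)‖ < ε) →
      ∀ r > 0, ∃ r' > 0, ∀ x y : Euc n,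
        patch (φ '' P) r' (φ x) = patch (φ '' P) r' (φ y) →
        patch P r x = patch P r y := by
  obtain ⟨M, hM, hdens⟩ := hRD
  obtain ⟨d, hd, hgap⟩ := hFLC.exists_pos_sub_eq_of_norm_sub_lt hUD (by positivity : 0 < 4 * M)
  set ε := min (1 / 7) (d / (8 * M))
  have hε₀ : 0 < ε := by positivity
  have hε : ε ≤ 1 / 7 := min_le_left _ _
  have hεd : 7 * ε * M < d := by
    have := min_le_right (1 / 7) (d / (8 * M))
    rw [le_div_iff₀ (by positivity)] at this
    nlinarith
  refine ⟨ε, hε₀, by linarith, fun φ hφd ⟨R, hR, hR_equiv⟩ hnorm r hr => ?_⟩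
  have hφ : ∀ a b, ‖φ b - φ a - (b - a)‖ ≤ ε * ‖b - a‖ := fun a b => by
    simpa using convex_univ.norm_image_sub_le_of_norm_fderiv_le' (fun u _ => hφd u)
      (fun u _ => (hnorm u).le) (mem_univ a) (mem_univ b)
  have hrigid : ∀ p ∈ P, ∀ p' ∈ P, ∀ q ∈ P, ∀ q' ∈ P, ‖p' - p‖ < 3 * M →
      φ q' - φ q = φ p' - φ p → q' - q = p' - p := fun p hp p' hp' q hq q' hq' =>
    sub_eq_sub_of_map_sub_eq hgap hφ hε₀.le hε hεd hp hp' hq hq'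
  set K := M + R + r
  refine ⟨2 * (K + 4 * M), by positivity, fun x y hpatch => ?_⟩
  obtain ⟨c, hshift, hmap⟩ :=
    exists_translation_of_patch_image_eq hdens hrigid hφ hε (by linarith) le_rfl hpatch
  have hxc : x + c = y :=
    add_eq_of_equivRange_fderiv hφd hφ (by linarith) hdens hR_equiv hR.le (by linarith) hshift hmap
  rw [← hxc]
  exact hshift x r (by simp only [sub_self, norm_zero]; linarith)
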